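/- arXiv:1311.4601 — 10 statements merged into one kernel-verified Lean document; each statement's English description precedes it below -/
import Mathlib

section
/- The set of points (r_a, r_b, r_c, r_d) in ℝ^4 satisfying the nine inequalities r_a ≥ 0, r_b ≥ 0, r_c ≥ 0, r_d ≥ 0, r_b ≤ 1, r_c ≤ 1, r_a + r_b + r_c ≤ 2, r_b + r_c + r_d ≤ 2, and r_a + r_b + r_c + r_d ≤ 3 is equal to the convex hull in ℝ^4 of the 14 points (0,0,0,0), (0,0,0,2), (2,0,0,0), (0,1,0,0), (0,0,1,0), (2,0,0,1), (1,0,0,2), (0,0,1,1), (1,1,0,0), (1,0,1,1), (1,1,0,1), (0,1,1,0), (0,1,0,1), (1,0,1,0). -/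
/-!
Write `s = r_b + r_c` and `Δ = {x, y ≥ 0, x + y ≤ 1}`. The slice `s = 0` of the region is the
pentagon `[0,1]² + Δ` in `(r_a, r_d)`, its part with `s ≤ 1` and `r_a, r_d ≤ 1` is the prism
`[0,1]² × Δ` in `(r_a, r_d) × (r_b, r_c)`, and the slice `s = 2` is the point `(0,1,1,0)`.
For `s ≤ 1` split `r_a = min r_a 1 + (r_a - 1)⁺` and likewise `r_d`: the two excesses sum to at
most `1 - s`, so the point is the combination with weights `1 - s` and `s` of a pentagon point and
a prism point. For `s ≥ 1` it is the combination with weights `2 - s` and `s - 1` of a prism point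
and `(0,1,1,0)`. Pentagon and prism are triangulated by the listed vertices.
-/

open Matrix

def butterflyRegion : Set (Fin 4 → ℝ) :=
  {r | 0 ≤ r 0 ∧ 0 ≤ r 1 ∧ 0 ≤ r 2 ∧ 0 ≤ r 3 ∧
      r 1 ≤ 1 ∧ r 2 ≤ 1 ∧ r 0 + r 1 + r 2 ≤ 2 ∧ r 1 + r 2 + r 3 ≤ 2 ∧
      r 0 + r 1 + r 2 + r 3 ≤ 3}

def butterflyVertices : Set (Fin 4 → ℝ) :=
  {![0,0,0,0], ![0,0,0,2], ![2,0,0,0], ![0,1,0,0], ![0,0,1,0],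
      ![2,0,0,1], ![1,0,0,2], ![0,0,1,1], ![1,1,0,0], ![1,0,1,1], ![1,1,0,1],
      ![0,1,1,0], ![0,1,0,1], ![1,0,1,0]}

lemma convex_butterflyRegion : Convex ℝ butterflyRegion := by
  rintro x ⟨hx₀, hx₁, hx₂, hx₃, hx₄, hx₅, hx₆, hx₇, hx₈⟩
    y ⟨hy₀, hy₁, hy₂, hy₃, hy₄, hy₅, hy₆, hy₇, hy₈⟩ p q hp hq hpq
  simp only [butterflyRegion, Set.mem_ofPred_eq, Pi.add_apply, Pi.smul_apply, smul_eq_mul]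
  refine ⟨?_, ?_, ?_, ?_, ?_, ?_, ?_, ?_, ?_⟩ <;> nlinarith

lemma butterflyVertices_subset_region : butterflyVertices ⊆ butterflyRegion := by
  rintro x (rfl|rfl|rfl|rfl|rfl|rfl|rfl|rfl|rfl|rfl|rfl|rfl|rfl|rfl) <;>
    norm_num [butterflyRegion, Matrix.cons_val_two, Matrix.cons_val_three]

lemma Convex.combo₃_mem {𝕜 E : Type*} [Field 𝕜] [LinearOrder 𝕜] [IsStrictOrderedRing 𝕜]
    [AddCommGroup E] [Module 𝕜 E] {s : Set E} (hs : Convex 𝕜 s) {x y z : E}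
    (hx : x ∈ s) (hy : y ∈ s) (hz : z ∈ s) {α β γ : 𝕜} (hα : 0 ≤ α) (hβ : 0 ≤ β) (hγ : 0 ≤ γ)
    (h : α + β + γ = 1) : α • x + β • y + γ • z ∈ s := by
  have := hs.sum_mem (t := Finset.univ) (w := ![α, β, γ]) (z := ![x, y, z])
    (by simp [Fin.forall_fin_succ, hα, hβ, hγ]) (by simp [Fin.sum_univ_three, h])
    (by simp [Fin.forall_fin_succ, hx, hy, hz])
  simpa [Fin.sum_univ_three] using this

lemma vec_mem_convexHull_of_pentagon {a d : ℝ} (ha : 0 ≤ a) (hd : 0 ≤ d) (ha₂ : a ≤ 2)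
    (hd₂ : d ≤ 2) (had : a + d ≤ 3) : ![a, 0, 0, d] ∈ convexHull ℝ butterflyVertices := by
  have hH := convex_convexHull ℝ butterflyVertices
  have hv : ∀ v ∈ butterflyVertices, v ∈ convexHull ℝ butterflyVertices := subset_convexHull ℝ _
  have hO := hv ![0, 0, 0, 0] (by simp [butterflyVertices])
  rcases le_total (2 * d) a with h₁ | h₁
  · convert hH.combo₃_mem (hv ![2, 0, 0, 0] (by simp [butterflyVertices]))
      (hv ![2, 0, 0, 1] (by simp [butterflyVertices])) hO
      (α := a / 2 - d) (β := d) (γ := 1 - a / 2) (by linarith) hd (by linarith) (by ring) using 1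
    ext i; fin_cases i <;> simp; ring
  rcases le_total (2 * a) d with h₂ | h₂
  · convert hH.combo₃_mem (hv ![0, 0, 0, 2] (by simp [butterflyVertices]))
      (hv ![1, 0, 0, 2] (by simp [butterflyVertices])) hO
      (α := d / 2 - a) (β := a) (γ := 1 - d / 2) (by linarith) ha (by linarith) (by ring) using 1
    ext i; fin_cases i <;> simp; ring
  · convert hH.combo₃_mem (hv ![2, 0, 0, 1] (by simp [butterflyVertices]))
      (hv ![1, 0, 0, 2] (by simp [butterflyVertices])) hO
      (α := (2 * a - d) / 3) (β := (2 * d - a) / 3) (γ := 1 - (a + d) / 3)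
      (by linarith) (by linarith) (by linarith) (by ring) using 1
    ext i; fin_cases i <;> simp <;> ring

lemma vec_mem_convexHull_of_square {a b d : ℝ} (hb : b = 0 ∨ b = 1) (ha : 0 ≤ a) (ha₁ : a ≤ 1)
    (hd : 0 ≤ d) (hd₁ : d ≤ 1) : ![a, b, 1 - b, d] ∈ convexHull ℝ butterflyVertices := by
  have hH := convex_convexHull ℝ butterflyVertices
  have hcorner : ∀ x y : ℝ, (x = 0 ∨ x = 1) → (y = 0 ∨ y = 1) →
      ![x, b, 1 - b, y] ∈ convexHull ℝ butterflyVertices := by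
    rintro x y (rfl | rfl) (rfl | rfl) <;> rcases hb with rfl | rfl <;>
      exact subset_convexHull ℝ _ (by norm_num [butterflyVertices])
  rcases le_total a d with h | h
  · convert hH.combo₃_mem (hcorner 1 1 (by simp) (by simp)) (hcorner 0 1 (by simp) (by simp))
      (hcorner 0 0 (by simp) (by simp)) ha (sub_nonneg.2 h) (sub_nonneg.2 hd₁) (by ring) using 1
    ext i; fin_cases i <;> simp <;> ring
  · convert hH.combo₃_mem (hcorner 1 1 (by simp) (by simp)) (hcorner 1 0 (by simp) (by simp))
      (hcorner 0 0 (by simp) (by simp)) hd (sub_nonneg.2 h) (sub_nonneg.2 ha₁) (by ring) using 1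
    ext i; fin_cases i <;> simp <;> ring

lemma vec_mem_convexHull_of_prism {a b c d : ℝ} (ha : 0 ≤ a) (ha₁ : a ≤ 1) (hd : 0 ≤ d)
    (hd₁ : d ≤ 1) (hb : 0 ≤ b) (hc : 0 ≤ c) (hbc : b + c ≤ 1) :
    ![a, b, c, d] ∈ convexHull ℝ butterflyVertices := by
  have h₀ := vec_mem_convexHull_of_pentagon ha hd (by linarith) (by linarith) (by linarith)
  have h₁ := vec_mem_convexHull_of_square (Or.inr rfl) ha ha₁ hd hd₁
  have h₂ := vec_mem_convexHull_of_square (Or.inl rfl) ha ha₁ hd hd₁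
  convert (convex_convexHull ℝ butterflyVertices).combo₃_mem h₀ h₁ h₂ (sub_nonneg.2 hbc) hb hc
    (by ring) using 1
  ext i; fin_cases i <;> simp <;> ring

lemma vec_mem_convexHull_of_sum_le_one {a b c d : ℝ} (ha : 0 ≤ a) (hb : 0 ≤ b) (hc : 0 ≤ c)
    (hd : 0 ≤ d) (hs : b + c ≤ 1) (habc : a + b + c ≤ 2) (hbcd : b + c + d ≤ 2)
    (habcd : a + b + c + d ≤ 3) : ![a, b, c, d] ∈ convexHull ℝ butterflyVertices := by
  set s := b + c
  have hexcess : (a - min a 1) + (d - min d 1) ≤ 1 - s := by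
    simp only [min_def]; split_ifs <;> linarith
  have hea : 0 ≤ a - min a 1 := sub_nonneg.2 (min_le_left a 1)
  have hed : 0 ≤ d - min d 1 := sub_nonneg.2 (min_le_left d 1)
  have ha₁ : 0 ≤ min a 1 := le_min ha zero_le_one
  have hd₁ : 0 ≤ min d 1 := le_min hd zero_le_one
  have h₀ : ![min a 1 + (a - min a 1) / (1 - s), 0, 0, min d 1 + (d - min d 1) / (1 - s)] ∈
      convexHull ℝ butterflyVertices := by
    have hea₁ : (a - min a 1) / (1 - s) ≤ 1 := div_le_one_of_le₀ (by linarith) (by linarith)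
    have hed₁ : (d - min d 1) / (1 - s) ≤ 1 := div_le_one_of_le₀ (by linarith) (by linarith)
    have hexcess₁ : (a - min a 1) / (1 - s) + (d - min d 1) / (1 - s) ≤ 1 := by
      rw [← add_div]; exact div_le_one_of_le₀ hexcess (by linarith)
    apply vec_mem_convexHull_of_pentagon <;>
      first | positivity | linarith [min_le_right a 1, min_le_right d 1]
  have h₁ : ![min a 1, b / s, c / s, min d 1] ∈ convexHull ℝ butterflyVertices := by
    refine vec_mem_convexHull_of_prism ha₁ (min_le_right a 1) hd₁ (min_le_right d 1)
      (by positivity) (by positivity) ?_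
    rw [← add_div]; exact div_self_le_one s
  -- At `s = 0` (resp. `s = 1`) the quotients by `s` (resp. `1 - s`) are junk, but their numerators
  -- vanish.
  have hqa : (1 - s) * ((a - min a 1) / (1 - s)) = a - min a 1 :=
    mul_div_cancel_of_imp' fun h => by linarith
  have hqd : (1 - s) * ((d - min d 1) / (1 - s)) = d - min d 1 :=
    mul_div_cancel_of_imp' fun h => by linarith
  have hqb : s * (b / s) = b := mul_div_cancel_of_imp' fun h => by linarith
  have hqc : s * (c / s) = c := mul_div_cancel_of_imp' fun h => by linarith
  convert (convex_convexHull ℝ butterflyVertices) h₀ h₁ (sub_nonneg.2 hs) (by positivity : 0 ≤ s)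
    (by ring) using 1
  ext i; fin_cases i <;> simp [mul_add, hqa, hqd, hqb, hqc] <;> ring

lemma vec_mem_convexHull_of_one_le_sum {a b c d : ℝ} (ha : 0 ≤ a) (hd : 0 ≤ d) (hb₁ : b ≤ 1)
    (hc₁ : c ≤ 1) (hs : 1 ≤ b + c) (habc : a + b + c ≤ 2) (hbcd : b + c + d ≤ 2) :
    ![a, b, c, d] ∈ convexHull ℝ butterflyVertices := by
  set t := 2 - (b + c)
  have ht : 0 ≤ t := by linarith
  have h₁ : ![a / t, (1 - c) / t, (1 - b) / t, d / t] ∈ convexHull ℝ butterflyVertices := by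
    refine vec_mem_convexHull_of_prism (by positivity) (div_le_one_of_le₀ (by linarith) ht)
      (by positivity) (div_le_one_of_le₀ (by linarith) ht) (div_nonneg (by linarith) ht)
      (div_nonneg (by linarith) ht) ?_
    rw [← add_div]; exact div_le_one_of_le₀ (by linarith) ht
  have h₂ : ![0, 1, 1, 0] ∈ convexHull ℝ butterflyVertices :=
    subset_convexHull ℝ _ (by simp [butterflyVertices])
  have hqa : t * (a / t) = a := mul_div_cancel_of_imp' fun h => by linarith
  have hqb : t * ((1 - c) / t) = 1 - c := mul_div_cancel_of_imp' fun h => by linarith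
  have hqc : t * ((1 - b) / t) = 1 - b := mul_div_cancel_of_imp' fun h => by linarith
  have hqd : t * (d / t) = d := mul_div_cancel_of_imp' fun h => by linarith
  convert (convex_convexHull ℝ butterflyVertices) h₁ h₂ ht (by linarith : 0 ≤ b + c - 1)
    (by ring) using 1
  ext i; fin_cases i <;> simp [hqa, hqb, hqc, hqd]

theorem generalized_butterfly_rate_region :
    {r : Fin 4 → ℝ | 0 ≤ r 0 ∧ 0 ≤ r 1 ∧ 0 ≤ r 2 ∧ 0 ≤ r 3 ∧
      r 1 ≤ 1 ∧ r 2 ≤ 1 ∧ r 0 + r 1 + r 2 ≤ 2 ∧ r 1 + r 2 + r 3 ≤ 2 ∧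
      r 0 + r 1 + r 2 + r 3 ≤ 3} =
    convexHull ℝ {![0,0,0,0], ![0,0,0,2], ![2,0,0,0], ![0,1,0,0], ![0,0,1,0],
      ![2,0,0,1], ![1,0,0,2], ![0,0,1,1], ![1,1,0,0], ![1,0,1,1], ![1,1,0,1],
      ![0,1,1,0], ![0,1,0,1], ![1,0,1,0]} := by
  refine Set.Subset.antisymm ?_
    (convexHull_min butterflyVertices_subset_region convex_butterflyRegion)
  rintro r ⟨ha, hb, hc, hd, hb₁, hc₁, habc, hbcd, habcd⟩
  rw [show r = ![r 0, r 1, r 2, r 3] by ext i; fin_cases i <;> rfl]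
  rcases le_total (r 1 + r 2) 1 with hs | hs
  · exact vec_mem_convexHull_of_sum_le_one ha hb hc hd hs habc hbcd habcd
  · exact vec_mem_convexHull_of_one_le_sum ha hd hb₁ hc₁ hs habc hbcd
end

section
/- The set of points (r_a, r_b, r_c, r_d) in ℝ^4 satisfying the ten inequalities r_a ≥ 0, r_b ≥ 0, r_c ≥ 0, r_d ≥ 0, r_b ≤ 1, r_c ≤ 1, r_a + r_b + r_c ≤ 2, r_b + r_c + r_d ≤ 2, r_a + r_b + r_c + r_d ≤ 3, and r_b + r_c ≤ 1 is equal to the convex hull in ℝ^4 of the 13 points (0,0,0,0), (0,0,0,2), (2,0,0,0), (0,1,0,0), (0,1,0,1), (0,0,1,0), (2,0,0,1), (1,0,0,2), (0,0,1,1), (1,0,1,0), (1,1,0,0), (1,0,1,1), (1,1,0,1). -/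
/-!
Write `s = r₁ + r₂`. The slice of the region at fixed `(r₁, r₂)` is the pentagon
`{0 ≤ r₀ ≤ 2 - s, 0 ≤ r₃ ≤ 2 - s, r₀ + r₃ ≤ 3 - s}`, which is the Minkowski combination
`(1 - s) • P + s • [0,1]²` of the pentagon `P = {0 ≤ a ≤ 2, 0 ≤ d ≤ 2, a + d ≤ 3}` and the unit
square. Hence
`r = (1 - s) • (a₀,0,0,d₀) + r₁ • (a₁,1,0,d₁) + r₂ • (a₁,0,1,d₁)` with `(a₀,d₀) ∈ P` and
`(a₁,d₁) ∈ [0,1]²`, and each of these three points lies in a face of the hull: the pentagon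
`{r₁ = r₂ = 0}` or one of the unit squares `{r₁ = 1, r₂ = 0}`, `{r₁ = 0, r₂ = 1}`, whose corners
are among the listed vertices. Conversely the region is convex and contains every vertex.
-/

open Matrix

section ConvexCombinations

variable {𝕜 E : Type*} [Field 𝕜] [LinearOrder 𝕜] [IsStrictOrderedRing 𝕜] [AddCommGroup E]
  [Module 𝕜 E] {S : Set E} {p u v : E} {x y : 𝕜}

theorem Convex.add_smul_add_smul_mem_of_triangle (hS : Convex 𝕜 S)
    (hp : p ∈ S) (hu : p + u ∈ S) (hv : p + v ∈ S) (hx : 0 ≤ x) (hy : 0 ≤ y)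
    (hxy : x + y ≤ 1) : p + x • u + y • v ∈ S := by
  have h := hS.sum_mem (t := Finset.univ) (w := ![1 - x - y, x, y]) (z := ![p, p + u, p + v])
    (by simp [Fin.forall_fin_succ]; exact ⟨by linarith, hx, hy⟩)
    (by simp [Fin.sum_univ_three]; ring) (by simp [Fin.forall_fin_succ, hp, hu, hv])
  convert h using 1
  simp [Fin.sum_univ_three]
  module

theorem Convex.add_smul_add_smul_mem_of_parallelogram (hS : Convex 𝕜 S)
    (hp : p ∈ S) (hu : p + u ∈ S) (hv : p + v ∈ S) (huv : p + u + v ∈ S)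
    (hx₀ : 0 ≤ x) (hx₁ : x ≤ 1) (hy₀ : 0 ≤ y) (hy₁ : y ≤ 1) : p + x • u + y • v ∈ S := by
  rw [add_assoc] at huv
  rcases le_total y x with h | h
  · convert hS.add_smul_add_smul_mem_of_triangle hp hu huv (sub_nonneg.2 h) hy₀ (by linarith)
      using 1
    module
  · convert hS.add_smul_add_smul_mem_of_triangle hp huv hv hx₀ (sub_nonneg.2 h) (by linarith)
      using 1
    module

theorem Convex.add_smul_add_smul_mem_of_pentagon (hS : Convex 𝕜 S) (hp : p ∈ S)
    (h20 : p + (2 : 𝕜) • u ∈ S) (h02 : p + (2 : 𝕜) • v ∈ S)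
    (h21 : p + (2 : 𝕜) • u + v ∈ S) (h12 : p + u + (2 : 𝕜) • v ∈ S)
    (hx₀ : 0 ≤ x) (hy₀ : 0 ≤ y) (hx₂ : x ≤ 2) (hy₂ : y ≤ 2) (hxy : x + y ≤ 3) :
    p + x • u + y • v ∈ S := by
  have hsmall : ∀ a b : 𝕜, 0 ≤ a → 0 ≤ b → a + b ≤ 2 → p + a • u + b • v ∈ S :=
    fun a b ha hb hab => by
      convert hS.add_smul_add_smul_mem_of_triangle hp h20 h02 (x := a / 2) (y := b / 2)
        (by positivity) (by positivity) (by linarith) using 1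
      module
  have h10 : p + u ∈ S := by simpa using hsmall 1 0 zero_le_one le_rfl (by norm_num)
  have h01 : p + v ∈ S := by simpa using hsmall 0 1 le_rfl zero_le_one (by norm_num)
  have h11 : p + u + v ∈ S := by simpa using hsmall 1 1 zero_le_one zero_le_one (by norm_num)
  -- The pentagon is covered by `[0,2] × [0,1]`, `[0,1] × [0,2]` and the triangle `(1,1), (2,1), (1,2)`.
  rcases le_total y 1 with hy₁ | hy₁
  · convert hS.add_smul_add_smul_mem_of_parallelogram hp h20 h01 h21 (x := x / 2)
      (by positivity) (by linarith) hy₀ hy₁ using 1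
    module
  rcases le_total x 1 with hx₁ | hx₁
  · convert hS.add_smul_add_smul_mem_of_parallelogram hp h10 h02 h12 hx₀ hx₁ (y := y / 2)
      (by positivity) (by linarith) using 1
    module
  · convert hS.add_smul_add_smul_mem_of_triangle h11 (u := u) (v := v)
      (by convert h21 using 1; module) (by convert h12 using 1; module)
      (sub_nonneg.2 hx₁) (sub_nonneg.2 hy₁) (by linarith) using 1
    module

end ConvexCombinations

theorem exists_pentagon_square_decomposition {s a d : ℝ} (hs₁ : s ≤ 1) (ha : 0 ≤ a)
    (hd : 0 ≤ d) (ha' : a ≤ 2 - s) (hd' : d ≤ 2 - s) (had : a + d ≤ 3 - s) :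
    ∃ a₀ d₀ a₁ d₁ : ℝ, (0 ≤ a₀ ∧ 0 ≤ d₀ ∧ a₀ ≤ 2 ∧ d₀ ≤ 2 ∧ a₀ + d₀ ≤ 3) ∧
      (0 ≤ a₁ ∧ a₁ ≤ 1 ∧ 0 ≤ d₁ ∧ d₁ ≤ 1) ∧
      a = (1 - s) * a₀ + s * a₁ ∧ d = (1 - s) * d₀ + s * d₁ := by
  rcases hs₁.eq_or_lt with rfl | hs
  · exact ⟨0, 0, a, d, by norm_num, ⟨ha, by linarith, hd, by linarith⟩, by ring, by ring⟩
  have ht : 0 < 1 - s := sub_pos.2 hs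
  refine ⟨(a - s * min a 1) / (1 - s), (d - s * min d 1) / (1 - s), min a 1, min d 1, ?_,
    ⟨le_min ha zero_le_one, min_le_right _ _, le_min hd zero_le_one, min_le_right _ _⟩,
    by field_simp; ring, by field_simp; ring⟩
  rw [← add_div, le_div_iff₀ ht, le_div_iff₀ ht, div_le_iff₀ ht, div_le_iff₀ ht,
    div_le_iff₀ ht]
  rcases min_cases a 1 with ⟨hma, _⟩ | ⟨hma, _⟩ <;>
    rcases min_cases d 1 with ⟨hmd, _⟩ | ⟨hmd, _⟩ <;>
    rw [hma, hmd] <;> refine ⟨?_, ?_, ?_, ?_, ?_⟩ <;> nlinarith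

def rateRegion : Set (Fin 4 → ℝ) :=
  {r | 0 ≤ r 0 ∧ 0 ≤ r 1 ∧ 0 ≤ r 2 ∧ 0 ≤ r 3 ∧
      r 1 ≤ 1 ∧ r 2 ≤ 1 ∧ r 0 + r 1 + r 2 ≤ 2 ∧ r 1 + r 2 + r 3 ≤ 2 ∧
      r 0 + r 1 + r 2 + r 3 ≤ 3 ∧ r 1 + r 2 ≤ 1}

def routingVertices : Set (Fin 4 → ℝ) :=
  {![0,0,0,0], ![0,0,0,2], ![2,0,0,0], ![0,1,0,0], ![0,1,0,1],
      ![0,0,1,0], ![2,0,0,1], ![1,0,0,2], ![0,0,1,1], ![1,0,1,0], ![1,1,0,0],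
      ![1,0,1,1], ![1,1,0,1]}

theorem convex_rateRegion : Convex ℝ rateRegion := by
  intro x hx y hy α β hα hβ hαβ
  obtain ⟨hx0, hx1, hx2, hx3, hx4, hx5, hx6, hx7, hx8, hx9⟩ := hx
  obtain ⟨hy0, hy1, hy2, hy3, hy4, hy5, hy6, hy7, hy8, hy9⟩ := hy
  simp only [rateRegion, Set.mem_ofPred_eq, Pi.add_apply, Pi.smul_apply, smul_eq_mul]
  refine ⟨?_, ?_, ?_, ?_, ?_, ?_, ?_, ?_, ?_, ?_⟩ <;> nlinarith

theorem routingVertices_subset_rateRegion : routingVertices ⊆ rateRegion := by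
  intro r hr
  simp only [routingVertices, Set.mem_insert_iff, Set.mem_singleton_iff] at hr
  rcases hr with rfl | rfl | rfl | rfl | rfl | rfl | rfl | rfl | rfl | rfl | rfl | rfl | rfl <;>
    norm_num [rateRegion, cons_val_two, cons_val_three]

theorem mem_convexHull_routingVertices_of_pentagon {a d : ℝ} (ha : 0 ≤ a) (hd : 0 ≤ d)
    (ha₂ : a ≤ 2) (hd₂ : d ≤ 2) (had : a + d ≤ 3) :
    ![a, 0, 0, d] ∈ convexHull ℝ routingVertices := by
  have hV : ∀ r ∈ routingVertices, r ∈ convexHull ℝ routingVertices := subset_convexHull ℝ _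
  convert (convex_convexHull ℝ routingVertices).add_smul_add_smul_mem_of_pentagon
    (p := ![0, 0, 0, 0]) (u := ![1, 0, 0, 0]) (v := ![0, 0, 0, 1])
    (hV _ (by simp [routingVertices])) (hV _ (by simp [routingVertices]))
    (hV _ (by simp [routingVertices])) (hV _ (by simp [routingVertices]))
    (hV _ (by simp [routingVertices])) ha hd ha₂ hd₂ had using 1
  simp

theorem mem_convexHull_routingVertices_of_square {a d : ℝ} (ha₀ : 0 ≤ a) (ha₁ : a ≤ 1)
    (hd₀ : 0 ≤ d) (hd₁ : d ≤ 1) :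
    ![a, 1, 0, d] ∈ convexHull ℝ routingVertices ∧
      ![a, 0, 1, d] ∈ convexHull ℝ routingVertices := by
  have hK := convex_convexHull ℝ routingVertices
  have hV : ∀ r ∈ routingVertices, r ∈ convexHull ℝ routingVertices := subset_convexHull ℝ _
  constructor
  · convert hK.add_smul_add_smul_mem_of_parallelogram (u := ![1, 0, 0, 0]) (v := ![0, 0, 0, 1])
      (hV ![0, 1, 0, 0] (by simp [routingVertices])) (hV _ (by simp [routingVertices]))
      (hV _ (by simp [routingVertices])) (hV _ (by simp [routingVertices]))
      ha₀ ha₁ hd₀ hd₁ using 1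
    simp
  · convert hK.add_smul_add_smul_mem_of_parallelogram (u := ![1, 0, 0, 0]) (v := ![0, 0, 0, 1])
      (hV ![0, 0, 1, 0] (by simp [routingVertices])) (hV _ (by simp [routingVertices]))
      (hV _ (by simp [routingVertices])) (hV _ (by simp [routingVertices]))
      ha₀ ha₁ hd₀ hd₁ using 1
    simp

theorem rateRegion_subset_convexHull : rateRegion ⊆ convexHull ℝ routingVertices := by
  rintro r ⟨ha, hb, hc, hd, -, -, habc, hbcd, habcd, hbc⟩
  obtain ⟨a₀, d₀, a₁, d₁, ⟨ha₀, hd₀, ha₀₂, hd₀₂, had₀⟩, ⟨ha₁, ha₁₁, hd₁, hd₁₁⟩, hra, hrd⟩ :=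
    exists_pentagon_square_decomposition hbc ha hd (by linarith) (by linarith) (by linarith)
  have hP := mem_convexHull_routingVertices_of_pentagon ha₀ hd₀ ha₀₂ hd₀₂ had₀
  obtain ⟨hB, hC⟩ := mem_convexHull_routingVertices_of_square ha₁ ha₁₁ hd₁ hd₁₁
  convert (convex_convexHull ℝ routingVertices).add_smul_add_smul_mem_of_triangle hP
    (u := ![a₁, 1, 0, d₁] - ![a₀, 0, 0, d₀]) (v := ![a₁, 0, 1, d₁] - ![a₀, 0, 0, d₀])
    (by rwa [add_sub_cancel]) (by rwa [add_sub_cancel]) hb hc hbc using 1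
  ext i
  fin_cases i
  · simp
    linear_combination hra
  · simp
  · simp
  · simp
    linear_combination hrd

theorem generalized_butterfly_routing_rate_region :
    {r : Fin 4 → ℝ | 0 ≤ r 0 ∧ 0 ≤ r 1 ∧ 0 ≤ r 2 ∧ 0 ≤ r 3 ∧
      r 1 ≤ 1 ∧ r 2 ≤ 1 ∧ r 0 + r 1 + r 2 ≤ 2 ∧ r 1 + r 2 + r 3 ≤ 2 ∧
      r 0 + r 1 + r 2 + r 3 ≤ 3 ∧ r 1 + r 2 ≤ 1} =
    convexHull ℝ {![0,0,0,0], ![0,0,0,2], ![2,0,0,0], ![0,1,0,0], ![0,1,0,1],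
      ![0,0,1,0], ![2,0,0,1], ![1,0,0,2], ![0,0,1,1], ![1,0,1,0], ![1,1,0,0],
      ![1,0,1,1], ![1,1,0,1]} :=
  rateRegion_subset_convexHull.antisymm
    (convexHull_min routingVertices_subset_rateRegion convex_rateRegion)
end

section
/- The set of points (r_a, r_b, r_c) in ℝ^3 satisfying the seven inequalities r_a ≥ 0, r_b ≥ 0, r_c ≥ 0, r_a ≤ 1, r_c ≤ 1, r_b + r_c ≤ 2, and r_a + r_b ≤ 2 is equal to the convex hull in ℝ^3 of the 8 points (0,0,0), (0,0,1), (1,0,0), (0,2,0), (0,1,1), (1,0,1), (1,1,0), (1,1,1). -/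
/-!
The region is an intersection of half-spaces containing the eight points, so it contains their
convex hull. Conversely, its part with `r 1 ≤ 1` is the unit cube, whose vertices are seven of
the given points together with `(0,1,0)`, the midpoint of `(0,0,0)` and `(0,2,0)`. Its part with
`r 1 ≥ 1` is the pyramid with apex `(0,2,0)` over the top face `r 1 = 1` of the cube: such an `r`
is `(r 1 - 1) • (0,2,0) + (2 - r 1) • q` with `q = (r 0 / (2 - r 1), 1, r 2 / (2 - r 1))`.
-/

open Matrix

theorem convexHull_pi_zero_one (ι : Type*) [Finite ι] :
    convexHull ℝ (Set.univ.pi fun _ : ι => ({0, 1} : Set ℝ)) = Set.Icc 0 1 := by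
  rw [convexHull_pi, convexHull_pair, segment_eq_Icc zero_le_one, Set.pi_univ_Icc]
  rfl

abbrev fanoRegion : Set (Fin 3 → ℝ) :=
  {r | 0 ≤ r 0 ∧ 0 ≤ r 1 ∧ 0 ≤ r 2 ∧ r 0 ≤ 1 ∧ r 2 ≤ 1 ∧ r 1 + r 2 ≤ 2 ∧ r 0 + r 1 ≤ 2}

abbrev fanoVertices : Set (Fin 3 → ℝ) :=
  {![0,0,0], ![0,0,1], ![1,0,0], ![0,2,0], ![0,1,1], ![1,0,1], ![1,1,0], ![1,1,1]}

theorem convex_fanoRegion : Convex ℝ fanoRegion := by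
  rintro x ⟨x0, x1, x2, x3, x4, x5, x6⟩ y ⟨y0, y1, y2, y3, y4, y5, y6⟩ a b ha hb hab
  simp only [Set.mem_ofPred_eq, Pi.add_apply, Pi.smul_apply, smul_eq_mul]
  refine ⟨?_, ?_, ?_, ?_, ?_, ?_, ?_⟩ <;> nlinarith

theorem fanoVertices_subset_fanoRegion : fanoVertices ⊆ fanoRegion := by
  simp only [Set.insert_subset_iff, Set.singleton_subset_iff]
  norm_num [cons_val_two]

theorem Icc_subset_convexHull_fanoVertices : Set.Icc 0 1 ⊆ convexHull ℝ fanoVertices := by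
  have hmid : ![0, 1, 0] ∈ convexHull ℝ fanoVertices := by
    convert convex_convexHull ℝ fanoVertices
      (subset_convexHull ℝ fanoVertices (by simp : ![0, 0, 0] ∈ fanoVertices))
      (subset_convexHull ℝ fanoVertices (by simp : ![0, 2, 0] ∈ fanoVertices))
      (by norm_num : (0 : ℝ) ≤ 1 / 2) (by norm_num : (0 : ℝ) ≤ 1 / 2) (by norm_num) using 1
    ext i; fin_cases i <;> norm_num
  rw [← convexHull_pi_zero_one]
  refine convexHull_min (fun x hx => ?_) (convex_convexHull ℝ _)
  simp only [Set.mem_pi, Set.mem_univ, Set.mem_insert_iff, Set.mem_singleton_iff,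
    forall_const] at hx
  have hx_eq : x = ![x 0, x 1, x 2] := by ext i; fin_cases i <;> rfl
  rw [hx_eq]
  rcases hx 0 with h0 | h0 <;> rcases hx 1 with h1 | h1 <;> rcases hx 2 with h2 | h2 <;>
    rw [h0, h1, h2] <;> first | exact hmid | exact subset_convexHull ℝ _ (by simp)

theorem mem_convexHull_fanoVertices_of_one_le {r : Fin 3 → ℝ} (hr : r ∈ fanoRegion)
    (hr1 : 1 ≤ r 1) : r ∈ convexHull ℝ fanoVertices := by
  obtain ⟨h0, -, h2, -, -, h12, h01⟩ := hr
  -- At `r 1 = 2` the division is `x / 0 = 0`, harmless since then `r 0 = r 2 = 0`.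
  have hscale : ∀ x, 0 ≤ x → x ≤ 2 - r 1 →
      x / (2 - r 1) ∈ Set.Icc 0 1 ∧ (2 - r 1) * (x / (2 - r 1)) = x := fun x hx hxr =>
    ⟨⟨div_nonneg hx (hx.trans hxr), div_le_one_of_le₀ hxr (hx.trans hxr)⟩,
      mul_div_cancel_of_imp' fun h => by linarith⟩
  obtain ⟨⟨hq0, hq0'⟩, hr0⟩ := hscale (r 0) h0 (by linarith)
  obtain ⟨⟨hq2, hq2'⟩, hr2⟩ := hscale (r 2) h2 (by linarith)
  have hq : ![r 0 / (2 - r 1), 1, r 2 / (2 - r 1)] ∈ Set.Icc 0 1 := by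
    refine ⟨fun i => ?_, fun i => ?_⟩ <;> fin_cases i <;> simp [hq0, hq0', hq2, hq2']
  have hapex : ![0, 2, 0] ∈ convexHull ℝ fanoVertices := subset_convexHull ℝ _ (by simp)
  convert convex_convexHull ℝ fanoVertices hapex (Icc_subset_convexHull_fanoVertices hq)
    (by linarith : 0 ≤ r 1 - 1) (by linarith : 0 ≤ 2 - r 1) (by ring) using 1
  ext i
  fin_cases i
  · simp [hr0]
  · simp; ring
  · simp [hr2]

theorem fano_rate_region :
    {r : Fin 3 → ℝ | 0 ≤ r 0 ∧ 0 ≤ r 1 ∧ 0 ≤ r 2 ∧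
      r 0 ≤ 1 ∧ r 2 ≤ 1 ∧ r 1 + r 2 ≤ 2 ∧ r 0 + r 1 ≤ 2} =
    convexHull ℝ {![0,0,0], ![0,0,1], ![1,0,0], ![0,2,0],
      ![0,1,1], ![1,0,1], ![1,1,0], ![1,1,1]} := by
  change fanoRegion = convexHull ℝ fanoVertices
  refine Set.Subset.antisymm (fun r hr => ?_)
    (convexHull_min fanoVertices_subset_fanoRegion convex_fanoRegion)
  rcases le_total (r 1) 1 with hr1 | hr1
  · obtain ⟨h0, h1, h2, h0', h2', -, -⟩ := hr
    refine Icc_subset_convexHull_fanoVertices ⟨fun i => ?_, fun i => ?_⟩ <;>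
      fin_cases i <;> assumption
  · exact mem_convexHull_fanoVertices_of_one_le hr hr1
end

section
/- The set of points (r_a, r_b, r_c) in ℝ^3 satisfying the six inequalities r_a ≥ 0, r_b ≥ 0, r_c ≥ 0, r_a ≤ 1, r_c ≤ 1, and r_a + r_b + r_c ≤ 2 is equal to the convex hull in ℝ^3 of the 7 points (0,0,0), (0,0,1), (1,0,0), (0,2,0), (0,1,1), (1,0,1), (1,1,0). -/
open Matrix

@[simp] lemma vec7_two {α : Type*} (x0 x1 x2 x3 x4 x5 x6 : α) : ![x0,x1,x2,x3,x4,x5,x6] 2 = x2 := rfl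
@[simp] lemma vec7_three {α : Type*} (x0 x1 x2 x3 x4 x5 x6 : α) : ![x0,x1,x2,x3,x4,x5,x6] 3 = x3 := rfl
@[simp] lemma vec7_four {α : Type*} (x0 x1 x2 x3 x4 x5 x6 : α) : ![x0,x1,x2,x3,x4,x5,x6] 4 = x4 := rfl
@[simp] lemma vec7_five {α : Type*} (x0 x1 x2 x3 x4 x5 x6 : α) : ![x0,x1,x2,x3,x4,x5,x6] 5 = x5 := rfl
@[simp] lemma vec7_six {α : Type*} (x0 x1 x2 x3 x4 x5 x6 : α) : ![x0,x1,x2,x3,x4,x5,x6] 6 = x6 := rfl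
@[simp] lemma vec3_two' {α : Type*} (x0 x1 x2 : α) : ![x0,x1,x2] 2 = x2 := rfl

lemma fin3_mk2 (h : 2 < 3) : (⟨2, h⟩ : Fin 3) = 2 := rfl

set_option maxHeartbeats 1000000 in
theorem fano_routing_rate_region :
    {r : Fin 3 → ℝ | 0 ≤ r 0 ∧ 0 ≤ r 1 ∧ 0 ≤ r 2 ∧
      r 0 ≤ 1 ∧ r 2 ≤ 1 ∧ r 0 + r 1 + r 2 ≤ 2} =
    convexHull ℝ {![0,0,0], ![0,0,1], ![1,0,0], ![0,2,0],
      ![0,1,1], ![1,0,1], ![1,1,0]} := by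
  apply Set.Subset.antisymm
  · intro r hr
    obtain ⟨ha0, hb0, hc0, ha1, hc1, hsum⟩ := hr
    obtain ⟨a, ha⟩ : ∃ a : ℝ, a = r 0 := ⟨_, rfl⟩
    obtain ⟨b, hb⟩ : ∃ b : ℝ, b = r 1 := ⟨_, rfl⟩
    obtain ⟨c, hc⟩ : ∃ c : ℝ, c = r 2 := ⟨_, rfl⟩
    rw [← ha] at ha0 ha1
    rw [← hb] at hb0
    rw [← hc] at hc0 hc1
    rw [← ha, ← hb, ← hc] at hsum
    by_cases hd : 2 - a - c = 0
    · have hb' : b = 0 := by linarith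
      have hreq : r = ![1,0,1] := by
        funext i
        fin_cases i <;> simp [← ha, ← hb, ← hc] <;> linarith
      rw [hreq]
      exact subset_convexHull ℝ _ (by simp)
    · have hdpos : 0 < 2 - a - c := lt_of_le_of_ne (by linarith) (Ne.symm hd)
      obtain ⟨t, htdef⟩ : ∃ t : ℝ, t = b / (2 - a - c) := ⟨_, rfl⟩
      have ht0 : 0 ≤ t := htdef ▸ div_nonneg hb0 hdpos.le
      have ht1 : t ≤ 1 := by
        rw [htdef, div_le_one hdpos]; linarith
      have hkey : t * (2 - a - c) = b := by
        rw [htdef]; field_simp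
      have hwsum : ∑ i, (![(1-t)*(1-a)*(1-c), (1-t)*(1-a)*c, (1-t)*a*(1-c),
          t*(1-a)*(1-c), t*(1-a)*c, a*c, t*a*(1-c)] : Fin 7 → ℝ) i = 1 := by
        simp [Fin.sum_univ_seven]; ring
      have hmem : Finset.univ.centerMass
          ![(1-t)*(1-a)*(1-c), (1-t)*(1-a)*c, (1-t)*a*(1-c),
            t*(1-a)*(1-c), t*(1-a)*c, a*c, t*a*(1-c)]
          ![![0,0,0], ![0,0,1], ![1,0,0], ![0,2,0], ![0,1,1], ![1,0,1], ![1,1,0]]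
          ∈ convexHull ℝ ({![0,0,0], ![0,0,1], ![1,0,0], ![0,2,0],
            ![0,1,1], ![1,0,1], ![1,1,0]} : Set (Fin 3 → ℝ)) := by
        apply Finset.centerMass_mem_convexHull
        · intro i _
          fin_cases i <;> simp <;>
            first
            | exact mul_nonneg (mul_nonneg (by linarith) (by linarith)) (by linarith)
            | exact mul_nonneg (by linarith) (by linarith)
        · rw [hwsum]; norm_num
        · intro i _
          fin_cases i <;> simp
      have hrw : r = Finset.univ.centerMass
          ![(1-t)*(1-a)*(1-c), (1-t)*(1-a)*c, (1-t)*a*(1-c),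
            t*(1-a)*(1-c), t*(1-a)*c, a*c, t*a*(1-c)]
          ![![0,0,0], ![0,0,1], ![1,0,0], ![0,2,0], ![0,1,1], ![1,0,1], ![1,1,0]] := by
        rw [Finset.centerMass_eq_of_sum_1 _ _ hwsum]
        funext j
        fin_cases j <;>
          simp only [Finset.sum_apply, Fin.sum_univ_seven, Pi.smul_apply, smul_eq_mul,
            vec7_two, vec7_three, vec7_four, vec7_five, vec7_six, vec3_two',
            Matrix.cons_val_zero, Matrix.cons_val_one, Matrix.head_cons, Fin.isValue,
            Fin.mk_zero, Fin.mk_one, fin3_mk2,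
            ← ha, ← hb, ← hc] <;>
          first | ring1 | (linear_combination (-1 : ℝ) * hkey)
      rw [hrw]; exact hmem
  · apply convexHull_min
    · intro x hx
      simp only [Set.mem_insert_iff, Set.mem_singleton_iff] at hx
      rcases hx with h|h|h|h|h|h|h <;> subst h <;>
        exact ⟨by norm_num, by norm_num, by norm_num, by norm_num, by norm_num, by norm_num⟩
    · intro x hx y hy p q hp hq hpq
      obtain ⟨hx0, hx1, hx2, hx3, hx4, hx5⟩ := hx
      obtain ⟨hy0, hy1, hy2, hy3, hy4, hy5⟩ := hy
      refine ⟨?_, ?_, ?_, ?_, ?_, ?_⟩ <;>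
        simp only [Pi.add_apply, Pi.smul_apply, smul_eq_mul] <;> nlinarith
end

section
/- The set of points (r_a, r_b, r_c, r_d) in ℝ^4 satisfying the six inequalities r_a ≥ 0, r_b ≥ 0, r_c ≥ 0, r_d ≥ 0, 2r_a + r_b + 2r_d ≤ 2, and r_a + r_b + r_c + 2r_d ≤ 2 is equal to the convex hull in ℝ^4 of the 6 points (0,0,0,0), (1,0,0,0), (0,0,0,1), (1,0,1,0), (0,2,0,0), (0,0,2,0). -/
open Matrix

/-!
The inequality description is an intersection of half-spaces, hence convex, and it contains the six
points, so it contains their convex hull. Conversely, since the origin is one of the points, it is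
enough to write a point `r` of the region as a combination of the other points with nonnegative
weights of total at most `1`. If `r 2 ≤ r 0`, take `(1,0,0,0), (0,0,0,1), (1,0,1,0), (0,2,0,0)` with
weights `r 0 - r 2, r 3, r 2, r 1 / 2`, of total at most `1` by `2 r 0 + r 1 + 2 r 3 ≤ 2`; otherwise
take `(0,0,0,1), (1,0,1,0), (0,2,0,0), (0,0,2,0)` with weights `r 3, r 0, r 1 / 2, (r 2 - r 0) / 2`,
of total at most `1` by `r 0 + r 1 + r 2 + 2 r 3 ≤ 2`.
-/

theorem Convex.sum_mem_of_zero_mem {𝕜 E ι : Type*} [Field 𝕜] [LinearOrder 𝕜] [IsStrictOrderedRing 𝕜]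
    [AddCommGroup E] [Module 𝕜 E] {s : Set E} (hs : Convex 𝕜 s) (h₀ : (0 : E) ∈ s)
    {t : Finset ι} {w : ι → 𝕜} {z : ι → E} (hw₀ : ∀ i ∈ t, 0 ≤ w i) (hw₁ : ∑ i ∈ t, w i ≤ 1)
    (hz : ∀ i ∈ t, z i ∈ s) : ∑ i ∈ t, w i • z i ∈ s := by
  rcases (Finset.sum_nonneg hw₀).eq_or_lt with hW | hW
  · rw [Finset.sum_eq_zero fun i hi => by
      rw [(Finset.sum_eq_zero_iff_of_nonneg hw₀).1 hW.symm i hi, zero_smul]]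
    exact h₀
  · rw [← smul_inv_smul₀ hW.ne' (∑ i ∈ t, w i • z i)]
    exact hs.smul_mem_of_zero_mem h₀ (hs.centerMass_mem hw₀ hW hz) ⟨hW.le, hw₁⟩

def vamosRegion : Set (Fin 4 → ℝ) :=
  {r | 0 ≤ r 0 ∧ 0 ≤ r 1 ∧ 0 ≤ r 2 ∧ 0 ≤ r 3 ∧
      2 * r 0 + r 1 + 2 * r 3 ≤ 2 ∧ r 0 + r 1 + r 2 + 2 * r 3 ≤ 2}

def vamosVertices : Set (Fin 4 → ℝ) :=
  {![0,0,0,0], ![1,0,0,0], ![0,0,0,1], ![1,0,1,0], ![0,2,0,0], ![0,0,2,0]}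

theorem convex_vamosRegion : Convex ℝ vamosRegion :=
  (convex_halfSpace_ge (LinearMap.proj 0).isLinear 0).inter <|
  (convex_halfSpace_ge (LinearMap.proj 1).isLinear 0).inter <|
  (convex_halfSpace_ge (LinearMap.proj 2).isLinear 0).inter <|
  (convex_halfSpace_ge (LinearMap.proj 3).isLinear 0).inter <|
  (convex_halfSpace_le (f := fun r : Fin 4 → ℝ => 2 * r 0 + r 1 + 2 * r 3)
    ⟨fun x y => by simp only [Pi.add_apply]; ring,
      fun c x => by simp only [Pi.smul_apply, smul_eq_mul]; ring⟩ 2).inter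
  (convex_halfSpace_le (f := fun r : Fin 4 → ℝ => r 0 + r 1 + r 2 + 2 * r 3)
    ⟨fun x y => by simp only [Pi.add_apply]; ring,
      fun c x => by simp only [Pi.smul_apply, smul_eq_mul]; ring⟩ 2)

theorem vamosVertices_subset_vamosRegion : vamosVertices ⊆ vamosRegion := by
  simp only [vamosVertices, Set.insert_subset_iff, Set.singleton_subset_iff]
  norm_num [vamosRegion, Matrix.cons_val_two, Matrix.cons_val_three]

theorem zero_mem_vamosVertices : 0 ∈ vamosVertices :=
  Or.inl (funext fun i => by fin_cases i <;> rfl)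

theorem vamosRegion_subset_convexHull : vamosRegion ⊆ convexHull ℝ vamosVertices := by
  rintro r ⟨ha, hb, hc, hd, h₁, h₂⟩
  have combo (w : Fin 4 → ℝ) (z : Fin 4 → Fin 4 → ℝ) (hw₀ : ∀ i, 0 ≤ w i) (hw₁ : ∑ i, w i ≤ 1)
      (hz : ∀ i, z i ∈ vamosVertices) : ∑ i, w i • z i ∈ convexHull ℝ vamosVertices :=
    (convex_convexHull ℝ vamosVertices).sum_mem_of_zero_mem
      (subset_convexHull ℝ vamosVertices zero_mem_vamosVertices)
      (fun i _ => hw₀ i) hw₁ (fun i _ => subset_convexHull ℝ vamosVertices (hz i))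
  rcases le_total (r 2) (r 0) with hca | hac
  · convert combo ![r 0 - r 2, r 3, r 2, r 1 / 2]
        ![![1,0,0,0], ![0,0,0,1], ![1,0,1,0], ![0,2,0,0]]
        (fun i => by fin_cases i <;> simp <;> linarith)
        (by simp [Fin.sum_univ_four]; linarith)
        (by simp [Fin.forall_fin_succ, vamosVertices]) using 1
    ext j; fin_cases j <;> simp [Fin.sum_univ_four]
  · convert combo ![r 3, r 0, r 1 / 2, (r 2 - r 0) / 2]
        ![![0,0,0,1], ![1,0,1,0], ![0,2,0,0], ![0,0,2,0]]
        (fun i => by fin_cases i <;> simp <;> linarith)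
        (by simp [Fin.sum_univ_four]; linarith)
        (by simp [Fin.forall_fin_succ, vamosVertices]) using 1
    ext j; fin_cases j <;> simp [Fin.sum_univ_four]

theorem vamos_routing_rate_region :
    {r : Fin 4 → ℝ | 0 ≤ r 0 ∧ 0 ≤ r 1 ∧ 0 ≤ r 2 ∧ 0 ≤ r 3 ∧
      2 * r 0 + r 1 + 2 * r 3 ≤ 2 ∧ r 0 + r 1 + r 2 + 2 * r 3 ≤ 2} =
    convexHull ℝ {![0,0,0,0], ![1,0,0,0], ![0,0,0,1],
      ![1,0,1,0], ![0,2,0,0], ![0,0,2,0]} :=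
  vamosRegion_subset_convexHull.antisymm
    (convexHull_min vamosVertices_subset_vamosRegion convex_vamosRegion)
end

section
/- Let A, B_1, ..., B_k be subspaces of a finite-dimensional vector space V over a field, and let f_i : A → V (for i = 1, ..., k) be linear maps with the range of f_i contained in B_i, such that f_1(u) + ... + f_k(u) = 0 for all u ∈ A. Then there is a subspace A' of A with dim A − dim A' ≤ dim B_1 + ... + dim B_k − dim(B_1 + ... + B_k) on which every f_i vanishes. -/
/-!
Collect the `f i` into one map `Φ : A → ∏ i, B i` and let `σ : ∏ i, B i → V` add up the
coordinates. Then `σ ∘ Φ = 0`, so the rank of `Φ` is at most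
`dim ker σ = ∑ i, dim B i - dim (⨆ i, B i)`, and all `f i` vanish on `A' = ker Φ`.
-/

open Module LinearMap

theorem Submodule.range_sum_subtype_comp_proj {ι R M : Type*} [Fintype ι] [Semiring R] [AddCommMonoid M]
    [Module R M] (B : ι → Submodule R M) :
    range (∑ i, (B i).subtype ∘ₗ proj i) = ⨆ i, B i := by
  classical
  apply le_antisymm
  · rintro _ ⟨x, rfl⟩
    rw [LinearMap.sum_apply]
    exact Submodule.sum_mem _ fun i _ => Submodule.mem_iSup_of_mem i (x i).2
  · refine iSup_le fun i b hb => ⟨Pi.single i ⟨b, hb⟩, ?_⟩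
    rw [LinearMap.sum_apply, Finset.sum_eq_single_of_mem i (Finset.mem_univ i)
      fun j _ hj => by simp [hj]]
    simp

theorem LinearMap.finrank_sub_finrank_ker_le_of_comp_eq_zero {K M N P : Type*} [DivisionRing K]
    [AddCommGroup M] [Module K M] [AddCommGroup N] [Module K N] [AddCommGroup P] [Module K P]
    [FiniteDimensional K M] [FiniteDimensional K N] (Φ : M →ₗ[K] N) (σ : N →ₗ[K] P)
    (h : σ ∘ₗ Φ = 0) :
    (finrank K M : ℤ) - finrank K (ker Φ) ≤ finrank K N - finrank K (range σ) := by
  have hΦ := Φ.finrank_range_add_finrank_ker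
  have hσ := σ.finrank_range_add_finrank_ker
  have hle : finrank K (range Φ) ≤ finrank K (ker σ) :=
    Submodule.finrank_mono (range_le_ker_iff.2 h)
  omega

/-- If `f i : A → V` are linear maps with range of `f i` in `B i` and `∑ i, f i = 0` on `A`,
then all `f i` vanish on a subspace of `A` of codimension at most
`∑ i, dim (B i) - dim (B 1 + ⋯ + B k)` in `A`. -/
theorem exists_kernel_subspace_of_sum_eq_zero_family
    {F V : Type*} [Field F] [AddCommGroup V] [Module F V] [FiniteDimensional F V]
    (k : ℕ) (A : Submodule F V) (B : Fin k → Submodule F V) (f : Fin k → (↥A →ₗ[F] V))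
    (hf : ∀ i, LinearMap.range (f i) ≤ B i)
    (hsum : ∀ u : ↥A, ∑ i : Fin k, f i u = 0) :
    ∃ A' : Submodule F ↥A,
      (Module.finrank F ↥A : ℤ) - Module.finrank F ↥A' ≤
        (∑ i : Fin k, (Module.finrank F ↥(B i) : ℤ)) - Module.finrank F ↥(⨆ i, B i) ∧
      ∀ u ∈ A', ∀ i, f i u = 0 := by
  let Φ : A →ₗ[F] ∀ i, B i := pi fun i => (f i).codRestrict (B i) fun u => hf i ⟨u, rfl⟩
  let σ : (∀ i, B i) →ₗ[F] V := ∑ i, (B i).subtype ∘ₗ proj i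
  have hσΦ : σ ∘ₗ Φ = 0 := by
    ext u
    simpa [σ, Φ] using hsum u
  refine ⟨ker Φ, ?_, fun u hu i => congrArg (fun x => (x i : V)) (mem_ker.1 hu)⟩
  have hcodim := finrank_sub_finrank_ker_le_of_comp_eq_zero Φ σ hσΦ
  rwa [Submodule.range_sum_subtype_comp_proj, finrank_pi_fintype, Nat.cast_sum] at hcodim
end

section
/- Let F be a field, let M be a k × k matrix over F, let N be an r × k matrix over F, and let λ_1, ..., λ_t be distinct scalars in F. Then the sum over i = 1, ..., t of the rank of the (k+r) × k block matrix obtained by stacking M − λ_i·I on top of N is at least (t−1)·k + rank(N). -/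
/-!
The kernel of the stacked matrix `(M - λᵢ I; N)` is `Eᵢ ∩ ker N`, where `Eᵢ` is the
`λᵢ`-eigenspace of `M`. Eigenspaces for distinct eigenvalues are independent, so the
dimensions of these kernels add up to at most `dim ker N = k - rank N`; rank–nullity
for each stacked matrix then gives the bound.
-/

open Module Matrix

theorem iSupIndep.sum_finrank_eq_finrank_iSup {K V ι : Type*} [DivisionRing K] [AddCommGroup V]
    [Module K V] [FiniteDimensional K V] [Fintype ι] [DecidableEq ι] {W : ι → Submodule K V}
    (h : iSupIndep W) : ∑ i, finrank K (W i) = finrank K ↥(⨆ i, W i) := by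
  rw [← Module.finrank_directSum, Submodule.iSup_eq_range_dfinsupp_lsum]
  exact (LinearMap.finrank_range_of_inj h.dfinsupp_lsum_injective).symm

theorem Matrix.ker_mulVecLin_fromRows {R m₁ m₂ n : Type*} [CommSemiring R] [Fintype n]
    (A₁ : Matrix m₁ n R) (A₂ : Matrix m₂ n R) :
    LinearMap.ker (fromRows A₁ A₂).mulVecLin =
      LinearMap.ker A₁.mulVecLin ⊓ LinearMap.ker A₂.mulVecLin := by
  ext v
  simp [fromRows_mulVec, funext_iff, Sum.forall]

theorem Matrix.ker_mulVecLin_sub_smul_one {R n : Type*} [CommRing R] [Fintype n] [DecidableEq n]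
    (A : Matrix n n R) (c : R) :
    LinearMap.ker (A - c • 1).mulVecLin = End.eigenspace A.mulVecLin c := by
  ext v
  simp [sub_eq_zero]

theorem Matrix.rank_eq_card_sub_finrank_ker {K m n : Type*} [Field K] [Fintype m] [Fintype n]
    (A : Matrix m n K) :
    (A.rank : ℤ) = Fintype.card n - finrank K (LinearMap.ker A.mulVecLin) := by
  rw [eq_sub_iff_add_eq, rank, ← Nat.cast_add, LinearMap.finrank_range_add_finrank_ker,
    finrank_fintype_fun_eq_card]

/-- For a `k × k` matrix `M`, an `r × k` matrix `N`, and distinct scalars `λ 1, …, λ t`,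
the sum of the ranks of the stacked matrices `(M - λ i • I; N)` is at least
`(t - 1) * k + rank N`. -/
theorem sum_rank_stacked_ge
    {F : Type*} [Field F] {k r t : ℕ}
    (M : Matrix (Fin k) (Fin k) F) (N : Matrix (Fin r) (Fin k) F)
    (lam : Fin t → F) (hlam : Function.Injective lam) :
    ((t : ℤ) - 1) * k + N.rank ≤
      ∑ i : Fin t, ((Matrix.fromRows (M - lam i • (1 : Matrix (Fin k) (Fin k) F)) N).rank : ℤ) := by
  set K := LinearMap.ker N.mulVecLin
  set W := fun i => End.eigenspace M.mulVecLin (lam i) ⊓ K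
  have hrank (i : Fin t) :
      ((fromRows (M - lam i • 1) N).rank : ℤ) = k - finrank F (W i) := by
    rw [rank_eq_card_sub_finrank_ker, ker_mulVecLin_fromRows, ker_mulVecLin_sub_smul_one,
      Fintype.card_fin]
  have hindep : iSupIndep W :=
    ((End.eigenspaces_iSupIndep M.mulVecLin).comp hlam).mono fun _ => inf_le_left
  have hsum : ∑ i, finrank F (W i) ≤ finrank F K :=
    hindep.sum_finrank_eq_finrank_iSup ▸ Submodule.finrank_mono (iSup_le fun _ => inf_le_right)
  have hN := N.rank_eq_card_sub_finrank_ker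
  simp only [hrank, Finset.sum_sub_distrib, Finset.sum_const, Finset.card_univ, Fintype.card_fin,
    nsmul_eq_mul, hN]
  linarith
end

section
/- In the vector space V = (GF(2))^3 over the two-element field, the subspaces A = span{(1,0,0)}, B = span{(0,1,0)}, C = span{(0,0,1)}, W = span{(1,1,0)}, X = span{(1,0,1)}, Y = span{(0,1,1)}, Z = span{(1,1,1)} violate the inequality 2H(A) + H(B) + 2H(C) ≤ H(W) + H(X) + H(Y) + H(Z) + 2H(A|Z,Y) + H(B|X,Z) + 2H(C|A,X) + 3H(X|W,Y) + 3H(Z|W,C) + 5H(W|A,B) + 5H(Y|B,C) + 5(H(A) + H(B) + H(C) − H(A,B,C)); that is, with these subspaces the left-hand side is strictly greater than the right-hand side. -/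
open Matrix

/-- `Hdim F S = dim S`, as an integer. -/
noncomputable def Hdim (F : Type*) {V : Type*} [Field F] [AddCommGroup V] [Module F V]
    (S : Submodule F V) : ℤ := Module.finrank F ↥S

/-- Conditional quantity `H(S | T) = dim (S + T) - dim T`, as an integer. -/
noncomputable def Hcond (F : Type*) {V : Type*} [Field F] [AddCommGroup V] [Module F V]
    (S T : Submodule F V) : ℤ := Hdim F (S ⊔ T) - Hdim F T

lemma Hcond_eq_zero {F V : Type*} [Field F] [AddCommGroup V] [Module F V]
    {S T : Submodule F V} (h : S ≤ T) : Hcond F S T = 0 := by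
  simp [Hcond, sup_eq_right.mpr h]

lemma Hdim_singleton {v : Fin 3 → ZMod 2} (h : v ≠ 0) :
    Hdim (ZMod 2) (Submodule.span (ZMod 2) {v}) = 1 := by
  simp [Hdim, finrank_span_singleton h]

lemma span_le_sup {u v w : Fin 3 → ZMod 2} (h : u = v + w) :
    Submodule.span (ZMod 2) {u} ≤
      Submodule.span (ZMod 2) {v} ⊔ Submodule.span (ZMod 2) {w} := by
  rw [Submodule.span_le, Set.singleton_subset_iff, h]
  exact Submodule.add_mem_sup (Submodule.mem_span_singleton_self _)
    (Submodule.mem_span_singleton_self _)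

/-- Over `GF(2)^3`, the one-dimensional Fano-configuration subspaces violate the
odd-characteristic linear rank inequality of the Fano network. -/
theorem fano_linear_rank_inequality_fails_char_two :
    letI F := ZMod 2
    ∀ (A B C W X Y Z : Submodule F (Fin 3 → F)),
      A = Submodule.span F {![1,0,0]} →
      B = Submodule.span F {![0,1,0]} →
      C = Submodule.span F {![0,0,1]} →
      W = Submodule.span F {![1,1,0]} →
      X = Submodule.span F {![1,0,1]} →
      Y = Submodule.span F {![0,1,1]} →
      Z = Submodule.span F {![1,1,1]} →
      2 * Hdim F A + Hdim F B + 2 * Hdim F C >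
        Hdim F W + Hdim F X + Hdim F Y + Hdim F Z
        + 2 * Hcond F A (Z ⊔ Y) + Hcond F B (X ⊔ Z) + 2 * Hcond F C (A ⊔ X)
        + 3 * Hcond F X (W ⊔ Y) + 3 * Hcond F Z (W ⊔ C)
        + 5 * Hcond F W (A ⊔ B) + 5 * Hcond F Y (B ⊔ C)
        + 5 * (Hdim F A + Hdim F B + Hdim F C - Hdim F (A ⊔ B ⊔ C)) := by
  intro A B C W X Y Z hA hB hC hW hX hY hZ
  subst hA hB hC hW hX hY hZ
  have habc : (Submodule.span (ZMod 2) {![(1:ZMod 2),0,0]} ⊔ Submodule.span (ZMod 2) {![0,1,0]})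
      ⊔ Submodule.span (ZMod 2) {![0,0,1]} = ⊤ := by
    rw [eq_top_iff]
    intro x _
    have hx : x = x 0 • ![(1:ZMod 2),0,0] + x 1 • ![0,1,0] + x 2 • ![0,0,1] := by
      funext i; fin_cases i <;> simp
    rw [hx]
    exact add_mem (add_mem
      (Submodule.mem_sup_left (Submodule.mem_sup_left
        (Submodule.smul_mem _ _ (Submodule.mem_span_singleton_self _))))
      (Submodule.mem_sup_left (Submodule.mem_sup_right
        (Submodule.smul_mem _ _ (Submodule.mem_span_singleton_self _)))))
      (Submodule.mem_sup_right
        (Submodule.smul_mem _ _ (Submodule.mem_span_singleton_self _)))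
  rw [habc]
  rw [Hcond_eq_zero (span_le_sup (u := ![1,0,0]) (v := ![1,1,1]) (w := ![0,1,1]) (by decide)),
      Hcond_eq_zero (span_le_sup (u := ![0,1,0]) (v := ![1,0,1]) (w := ![1,1,1]) (by decide)),
      Hcond_eq_zero (span_le_sup (u := ![0,0,1]) (v := ![1,0,0]) (w := ![1,0,1]) (by decide)),
      Hcond_eq_zero (span_le_sup (u := ![1,0,1]) (v := ![1,1,0]) (w := ![0,1,1]) (by decide)),
      Hcond_eq_zero (span_le_sup (u := ![1,1,1]) (v := ![1,1,0]) (w := ![0,0,1]) (by decide)),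
      Hcond_eq_zero (span_le_sup (u := ![1,1,0]) (v := ![1,0,0]) (w := ![0,1,0]) (by decide)),
      Hcond_eq_zero (span_le_sup (u := ![0,1,1]) (v := ![0,1,0]) (w := ![0,0,1]) (by decide))]
  rw [Hdim_singleton (by decide), Hdim_singleton (by decide), Hdim_singleton (by decide),
      Hdim_singleton (by decide), Hdim_singleton (by decide), Hdim_singleton (by decide),
      Hdim_singleton (by decide)]
  have htop : Hdim (ZMod 2) (⊤ : Submodule (ZMod 2) (Fin 3 → ZMod 2)) = 3 := by
    simp [Hdim, finrank_top]
  rw [htop]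
  norm_num
end

section
/- Let F be any field and let V be a vector space over F with dim V ≤ 2. Then for all subspaces A, B, C, W, X, Y, Z of V, the inequality 2H(A) + H(B) + 2H(C) ≤ H(W) + H(X) + H(Y) + H(Z) + 2H(A|Z,Y) + H(B|X,Z) + 2H(C|A,X) + 3H(X|W,Y) + 3H(Z|W,C) + 5H(W|A,B) + 5H(Y|B,C) + 5(H(A) + H(B) + H(C) − H(A,B,C)) holds. -/
private lemma rk_submod {F V : Type*} [Field F] [AddCommGroup V] [Module F V]
    [FiniteDimensional F V] (S T U : Submodule F V) :
    Module.finrank F ↥(S ⊔ T ⊔ U) + Module.finrank F ↥S ≤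
      Module.finrank F ↥(S ⊔ T) + Module.finrank F ↥(S ⊔ U) := by
  have h := Submodule.finrank_sup_add_finrank_inf_eq (S ⊔ T) (S ⊔ U)
  have e : (S ⊔ T) ⊔ (S ⊔ U) = S ⊔ T ⊔ U := by
    rw [sup_sup_sup_comm, sup_idem, ← sup_assoc]
  rw [e] at h
  have h2 : Module.finrank F ↥S ≤ Module.finrank F ↥((S ⊔ T) ⊓ (S ⊔ U)) :=
    Submodule.finrank_mono (le_inf le_sup_left le_sup_left)
  omega

/-- The linear rank inequality derived from the Fano network holds over any field when the
ambient space has dimension at most 2. -/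
theorem fano_linear_rank_inequality_dim_le_two
    {F V : Type*} [Field F] [AddCommGroup V] [Module F V] [FiniteDimensional F V]
    (hdim : Module.finrank F V ≤ 2)
    (A B C W X Y Z : Submodule F V) :
    2 * Hdim F A + Hdim F B + 2 * Hdim F C ≤
      Hdim F W + Hdim F X + Hdim F Y + Hdim F Z
      + 2 * Hcond F A (Z ⊔ Y) + Hcond F B (X ⊔ Z) + 2 * Hcond F C (A ⊔ X)
      + 3 * Hcond F X (W ⊔ Y) + 3 * Hcond F Z (W ⊔ C)
      + 5 * Hcond F W (A ⊔ B) + 5 * Hcond F Y (B ⊔ C)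
      + 5 * (Hdim F A + Hdim F B + Hdim F C - Hdim F (A ⊔ B ⊔ C)) := by
  simp only [Hcond, Hdim]
  rw [show (A ⊔ (Z ⊔ Y) : Submodule F V) = A ⊔ Y ⊔ Z from by ac_rfl, show (B ⊔ (X ⊔ Z) : Submodule F V) = B ⊔ X ⊔ Z from by ac_rfl, show (C ⊔ (A ⊔ X) : Submodule F V) = A ⊔ C ⊔ X from by ac_rfl, show (X ⊔ (W ⊔ Y) : Submodule F V) = W ⊔ X ⊔ Y from by ac_rfl, show (Z ⊔ (W ⊔ C) : Submodule F V) = C ⊔ W ⊔ Z from by ac_rfl, show (W ⊔ (A ⊔ B) : Submodule F V) = A ⊔ B ⊔ W from by ac_rfl, show (Y ⊔ (B ⊔ C) : Submodule F V) = B ⊔ C ⊔ Y from by ac_rfl, show (Z ⊔ Y : Submodule F V) = Y ⊔ Z from by ac_rfl, show (W ⊔ C : Submodule F V) = C ⊔ W from by ac_rfl]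
  have h1 : Module.finrank F ↥(A ⊔ B) ≤ Module.finrank F ↥(A ⊔ B ⊔ W) := Submodule.finrank_mono (le_sup_left)
  have h2 : Module.finrank F ↥(A ⊔ C) ≤ Module.finrank F ↥(A ⊔ C ⊔ X) := Submodule.finrank_mono (le_sup_left)
  have h3 : Module.finrank F ↥(B ⊔ C) ≤ Module.finrank F ↥(B ⊔ C ⊔ Y) := Submodule.finrank_mono (le_sup_left)
  have h4 : Module.finrank F ↥(B ⊔ Z) ≤ Module.finrank F ↥(B ⊔ X ⊔ Z) := Submodule.finrank_mono (by rw [show (B ⊔ X ⊔ Z : Submodule F V) = B ⊔ Z ⊔ X from by ac_rfl]; exact le_sup_left)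
  have h5 : Module.finrank F ↥(C ⊔ W) ≤ Module.finrank F ↥(C ⊔ W ⊔ Z) := Submodule.finrank_mono (le_sup_left)
  have h6 : Module.finrank F ↥(C ⊔ X) ≤ Module.finrank F ↥(A ⊔ C ⊔ X) := Submodule.finrank_mono (by rw [show (A ⊔ C ⊔ X : Submodule F V) = C ⊔ X ⊔ A from by ac_rfl]; exact le_sup_left)
  have h7 : Module.finrank F ↥(W ⊔ Y) ≤ Module.finrank F ↥(W ⊔ X ⊔ Y) := Submodule.finrank_mono (by rw [show (W ⊔ X ⊔ Y : Submodule F V) = W ⊔ Y ⊔ X from by ac_rfl]; exact le_sup_left)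
  have h8 : Module.finrank F ↥(A ⊔ B ⊔ C) ≤ Module.finrank F ↥(A ⊔ B ⊔ C ⊔ W) := Submodule.finrank_mono (le_sup_left)
  have h9 : Module.finrank F ↥(A ⊔ B ⊔ C) ≤ Module.finrank F ↥(A ⊔ B ⊔ C ⊔ X) := Submodule.finrank_mono (le_sup_left)
  have h10 : Module.finrank F ↥(A ⊔ B ⊔ C) ≤ Module.finrank F ↥(A ⊔ B ⊔ C ⊔ Y) := Submodule.finrank_mono (le_sup_left)
  have h11 : Module.finrank F ↥(A ⊔ B ⊔ X) ≤ Module.finrank F ↥(A ⊔ B ⊔ W ⊔ X) := Submodule.finrank_mono (by rw [show (A ⊔ B ⊔ W ⊔ X : Submodule F V) = A ⊔ B ⊔ X ⊔ W from by ac_rfl]; exact le_sup_left)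
  have h12 : Module.finrank F ↥(A ⊔ B ⊔ Y) ≤ Module.finrank F ↥(A ⊔ B ⊔ Y ⊔ Z) := Submodule.finrank_mono (le_sup_left)
  have h13 : Module.finrank F ↥(A ⊔ C ⊔ Y) ≤ Module.finrank F ↥(A ⊔ C ⊔ Y ⊔ Z) := Submodule.finrank_mono (le_sup_left)
  have h14 : Module.finrank F ↥(B ⊔ C ⊔ Z) ≤ Module.finrank F ↥(B ⊔ C ⊔ X ⊔ Z) := Submodule.finrank_mono (by rw [show (B ⊔ C ⊔ X ⊔ Z : Submodule F V) = B ⊔ C ⊔ Z ⊔ X from by ac_rfl]; exact le_sup_left)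
  have h15 : Module.finrank F ↥(B ⊔ W ⊔ X) ≤ Module.finrank F ↥(B ⊔ W ⊔ X ⊔ Y) := Submodule.finrank_mono (le_sup_left)
  have h16 : Module.finrank F ↥(B ⊔ Y ⊔ Z) ≤ Module.finrank F ↥(B ⊔ C ⊔ Y ⊔ Z) := Submodule.finrank_mono (by rw [show (B ⊔ C ⊔ Y ⊔ Z : Submodule F V) = B ⊔ Y ⊔ Z ⊔ C from by ac_rfl]; exact le_sup_left)
  have h17 : Module.finrank F ↥(C ⊔ W ⊔ X) ≤ Module.finrank F ↥(C ⊔ W ⊔ X ⊔ Y) := Submodule.finrank_mono (le_sup_left)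
  have h18 : Module.finrank F ↥(C ⊔ X ⊔ Z) ≤ Module.finrank F ↥(C ⊔ W ⊔ X ⊔ Z) := Submodule.finrank_mono (by rw [show (C ⊔ W ⊔ X ⊔ Z : Submodule F V) = C ⊔ X ⊔ Z ⊔ W from by ac_rfl]; exact le_sup_left)
  have h19 : Module.finrank F ↥(C ⊔ Y ⊔ Z) ≤ Module.finrank F ↥(B ⊔ C ⊔ Y ⊔ Z) := Submodule.finrank_mono (by rw [show (B ⊔ C ⊔ Y ⊔ Z : Submodule F V) = C ⊔ Y ⊔ Z ⊔ B from by ac_rfl]; exact le_sup_left)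
  have h20 : Module.finrank F ↥(C ⊔ Y ⊔ Z) ≤ Module.finrank F ↥(C ⊔ W ⊔ Y ⊔ Z) := Submodule.finrank_mono (by rw [show (C ⊔ W ⊔ Y ⊔ Z : Submodule F V) = C ⊔ Y ⊔ Z ⊔ W from by ac_rfl]; exact le_sup_left)
  have h21 : Module.finrank F ↥(A ⊔ B ⊔ C ⊔ W) ≤ Module.finrank F ↥(A ⊔ B ⊔ C ⊔ W ⊔ X) := Submodule.finrank_mono (le_sup_left)
  have h22 : Module.finrank F ↥(A ⊔ B ⊔ C ⊔ W ⊔ X) ≤ Module.finrank F ↥(A ⊔ B ⊔ C ⊔ W ⊔ X ⊔ Y) := Submodule.finrank_mono (le_sup_left)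
  have h23 : Module.finrank F ↥(A ⊔ B ⊔ C ⊔ W ⊔ X ⊔ Y) ≤ Module.finrank F ↥(A ⊔ B ⊔ C ⊔ W ⊔ X ⊔ Y ⊔ Z) := Submodule.finrank_mono (le_sup_left)
  have h24 : Module.finrank F ↥(A ⊔ B ⊔ C) + Module.finrank F ↥(A) ≤ Module.finrank F ↥(A ⊔ B) + Module.finrank F ↥(A ⊔ C) := by
    have hh := rk_submod (A : Submodule F V) B C
    exact hh
  have h25 : Module.finrank F ↥(A ⊔ B ⊔ Y) + Module.finrank F ↥(A) ≤ Module.finrank F ↥(A ⊔ B) + Module.finrank F ↥(A ⊔ Y) := by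
    have hh := rk_submod (A : Submodule F V) B Y
    exact hh
  have h26 : Module.finrank F ↥(B ⊔ W ⊔ Y) + Module.finrank F ↥(B) ≤ Module.finrank F ↥(B ⊔ W) + Module.finrank F ↥(B ⊔ Y) := by
    have hh := rk_submod (B : Submodule F V) W Y
    exact hh
  have h27 : Module.finrank F ↥(B ⊔ Y ⊔ Z) + Module.finrank F ↥(B) ≤ Module.finrank F ↥(B ⊔ Y) + Module.finrank F ↥(B ⊔ Z) := by
    have hh := rk_submod (B : Submodule F V) Y Z
    exact hh
  have h28 : Module.finrank F ↥(C ⊔ W ⊔ X) + Module.finrank F ↥(C) ≤ Module.finrank F ↥(C ⊔ W) + Module.finrank F ↥(C ⊔ X) := by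
    have hh := rk_submod (C : Submodule F V) W X
    exact hh
  have h29 : Module.finrank F ↥(C ⊔ W ⊔ Y) + Module.finrank F ↥(C) ≤ Module.finrank F ↥(C ⊔ W) + Module.finrank F ↥(C ⊔ Y) := by
    have hh := rk_submod (C : Submodule F V) W Y
    exact hh
  have h30 : Module.finrank F ↥(A ⊔ B ⊔ C ⊔ X) + Module.finrank F ↥(A ⊔ X) ≤ Module.finrank F ↥(A ⊔ B ⊔ X) + Module.finrank F ↥(A ⊔ C ⊔ X) := by
    have hh := rk_submod (A ⊔ X : Submodule F V) B C
    rw [show (A ⊔ X ⊔ B ⊔ C : Submodule F V) = A ⊔ B ⊔ C ⊔ X from by ac_rfl, show (A ⊔ X ⊔ B : Submodule F V) = A ⊔ B ⊔ X from by ac_rfl, show (A ⊔ X ⊔ C : Submodule F V) = A ⊔ C ⊔ X from by ac_rfl] at hh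
    exact hh
  have h31 : Module.finrank F ↥(B ⊔ C ⊔ Y ⊔ Z) + Module.finrank F ↥(B ⊔ C) ≤ Module.finrank F ↥(B ⊔ C ⊔ Y) + Module.finrank F ↥(B ⊔ C ⊔ Z) := by
    have hh := rk_submod (B ⊔ C : Submodule F V) Y Z
    exact hh
  have h32 : Module.finrank F ↥(A ⊔ B ⊔ W ⊔ X) + Module.finrank F ↥(B ⊔ W) ≤ Module.finrank F ↥(A ⊔ B ⊔ W) + Module.finrank F ↥(B ⊔ W ⊔ X) := by
    have hh := rk_submod (B ⊔ W : Submodule F V) A X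
    rw [show (B ⊔ W ⊔ A ⊔ X : Submodule F V) = A ⊔ B ⊔ W ⊔ X from by ac_rfl, show (B ⊔ W ⊔ A : Submodule F V) = A ⊔ B ⊔ W from by ac_rfl] at hh
    exact hh
  have h33 : Module.finrank F ↥(A ⊔ B ⊔ C ⊔ Y) + Module.finrank F ↥(B ⊔ Y) ≤ Module.finrank F ↥(A ⊔ B ⊔ Y) + Module.finrank F ↥(B ⊔ C ⊔ Y) := by
    have hh := rk_submod (B ⊔ Y : Submodule F V) A C
    rw [show (B ⊔ Y ⊔ A ⊔ C : Submodule F V) = A ⊔ B ⊔ C ⊔ Y from by ac_rfl, show (B ⊔ Y ⊔ A : Submodule F V) = A ⊔ B ⊔ Y from by ac_rfl, show (B ⊔ Y ⊔ C : Submodule F V) = B ⊔ C ⊔ Y from by ac_rfl] at hh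
    exact hh
  have h34 : Module.finrank F ↥(C ⊔ W ⊔ X ⊔ Z) + Module.finrank F ↥(C ⊔ W) ≤ Module.finrank F ↥(C ⊔ W ⊔ X) + Module.finrank F ↥(C ⊔ W ⊔ Z) := by
    have hh := rk_submod (C ⊔ W : Submodule F V) X Z
    exact hh
  have h35 : Module.finrank F ↥(C ⊔ W ⊔ Y ⊔ Z) + Module.finrank F ↥(C ⊔ W) ≤ Module.finrank F ↥(C ⊔ W ⊔ Y) + Module.finrank F ↥(C ⊔ W ⊔ Z) := by
    have hh := rk_submod (C ⊔ W : Submodule F V) Y Z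
    exact hh
  have h36 : Module.finrank F ↥(A ⊔ B ⊔ C ⊔ Y) + Module.finrank F ↥(C ⊔ Y) ≤ Module.finrank F ↥(A ⊔ C ⊔ Y) + Module.finrank F ↥(B ⊔ C ⊔ Y) := by
    have hh := rk_submod (C ⊔ Y : Submodule F V) A B
    rw [show (C ⊔ Y ⊔ A ⊔ B : Submodule F V) = A ⊔ B ⊔ C ⊔ Y from by ac_rfl, show (C ⊔ Y ⊔ A : Submodule F V) = A ⊔ C ⊔ Y from by ac_rfl, show (C ⊔ Y ⊔ B : Submodule F V) = B ⊔ C ⊔ Y from by ac_rfl] at hh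
    exact hh
  have h37 : Module.finrank F ↥(B ⊔ W ⊔ X ⊔ Y) + Module.finrank F ↥(W ⊔ Y) ≤ Module.finrank F ↥(B ⊔ W ⊔ Y) + Module.finrank F ↥(W ⊔ X ⊔ Y) := by
    have hh := rk_submod (W ⊔ Y : Submodule F V) B X
    rw [show (W ⊔ Y ⊔ B ⊔ X : Submodule F V) = B ⊔ W ⊔ X ⊔ Y from by ac_rfl, show (W ⊔ Y ⊔ B : Submodule F V) = B ⊔ W ⊔ Y from by ac_rfl, show (W ⊔ Y ⊔ X : Submodule F V) = W ⊔ X ⊔ Y from by ac_rfl] at hh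
    exact hh
  have h38 : Module.finrank F ↥(C ⊔ W ⊔ X ⊔ Y) + Module.finrank F ↥(W ⊔ Y) ≤ Module.finrank F ↥(C ⊔ W ⊔ Y) + Module.finrank F ↥(W ⊔ X ⊔ Y) := by
    have hh := rk_submod (W ⊔ Y : Submodule F V) C X
    rw [show (W ⊔ Y ⊔ C ⊔ X : Submodule F V) = C ⊔ W ⊔ X ⊔ Y from by ac_rfl, show (W ⊔ Y ⊔ C : Submodule F V) = C ⊔ W ⊔ Y from by ac_rfl, show (W ⊔ Y ⊔ X : Submodule F V) = W ⊔ X ⊔ Y from by ac_rfl] at hh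
    exact hh
  have h39 : Module.finrank F ↥(B ⊔ C ⊔ X ⊔ Z) + Module.finrank F ↥(X ⊔ Z) ≤ Module.finrank F ↥(B ⊔ X ⊔ Z) + Module.finrank F ↥(C ⊔ X ⊔ Z) := by
    have hh := rk_submod (X ⊔ Z : Submodule F V) B C
    rw [show (X ⊔ Z ⊔ B ⊔ C : Submodule F V) = B ⊔ C ⊔ X ⊔ Z from by ac_rfl, show (X ⊔ Z ⊔ B : Submodule F V) = B ⊔ X ⊔ Z from by ac_rfl, show (X ⊔ Z ⊔ C : Submodule F V) = C ⊔ X ⊔ Z from by ac_rfl] at hh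
    exact hh
  have h40 : Module.finrank F ↥(A ⊔ B ⊔ Y ⊔ Z) + Module.finrank F ↥(Y ⊔ Z) ≤ Module.finrank F ↥(A ⊔ Y ⊔ Z) + Module.finrank F ↥(B ⊔ Y ⊔ Z) := by
    have hh := rk_submod (Y ⊔ Z : Submodule F V) A B
    rw [show (Y ⊔ Z ⊔ A ⊔ B : Submodule F V) = A ⊔ B ⊔ Y ⊔ Z from by ac_rfl, show (Y ⊔ Z ⊔ A : Submodule F V) = A ⊔ Y ⊔ Z from by ac_rfl, show (Y ⊔ Z ⊔ B : Submodule F V) = B ⊔ Y ⊔ Z from by ac_rfl] at hh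
    exact hh
  have h41 : Module.finrank F ↥(A ⊔ C ⊔ Y ⊔ Z) + Module.finrank F ↥(Y ⊔ Z) ≤ Module.finrank F ↥(A ⊔ Y ⊔ Z) + Module.finrank F ↥(C ⊔ Y ⊔ Z) := by
    have hh := rk_submod (Y ⊔ Z : Submodule F V) A C
    rw [show (Y ⊔ Z ⊔ A ⊔ C : Submodule F V) = A ⊔ C ⊔ Y ⊔ Z from by ac_rfl, show (Y ⊔ Z ⊔ A : Submodule F V) = A ⊔ Y ⊔ Z from by ac_rfl, show (Y ⊔ Z ⊔ C : Submodule F V) = C ⊔ Y ⊔ Z from by ac_rfl] at hh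
    exact hh
  have h42 : Module.finrank F ↥(A ⊔ B) ≤ Module.finrank F ↥(A) + Module.finrank F ↥(B) := by
    have hh := Submodule.finrank_sup_add_finrank_inf_eq (A : Submodule F V) B
    omega
  have h43 : Module.finrank F ↥(A ⊔ X) ≤ Module.finrank F ↥(A) + Module.finrank F ↥(X) := by
    have hh := Submodule.finrank_sup_add_finrank_inf_eq (A : Submodule F V) X
    omega
  have h44 : Module.finrank F ↥(A ⊔ Y) ≤ Module.finrank F ↥(A) + Module.finrank F ↥(Y) := by
    have hh := Submodule.finrank_sup_add_finrank_inf_eq (A : Submodule F V) Y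
    omega
  have h45 : Module.finrank F ↥(B ⊔ C) ≤ Module.finrank F ↥(B) + Module.finrank F ↥(C) := by
    have hh := Submodule.finrank_sup_add_finrank_inf_eq (B : Submodule F V) C
    omega
  have h46 : Module.finrank F ↥(B ⊔ Z) ≤ Module.finrank F ↥(B) + Module.finrank F ↥(Z) := by
    have hh := Submodule.finrank_sup_add_finrank_inf_eq (B : Submodule F V) Z
    omega
  have h47 : Module.finrank F ↥(C ⊔ W) ≤ Module.finrank F ↥(C) + Module.finrank F ↥(W) := by
    have hh := Submodule.finrank_sup_add_finrank_inf_eq (C : Submodule F V) W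
    omega
  have h48 : Module.finrank F ↥(X ⊔ Z) ≤ Module.finrank F ↥(X) + Module.finrank F ↥(Z) := by
    have hh := Submodule.finrank_sup_add_finrank_inf_eq (X : Submodule F V) Z
    omega
  have h49 : Module.finrank F ↥(A ⊔ B ⊔ C ⊔ W ⊔ X ⊔ Y ⊔ Z) ≤ 2 := le_trans (Submodule.finrank_le _) hdim
  have t0 := Nat.mul_le_mul_left 11 h1
  have t1 := Nat.mul_le_mul_left 1 h2
  have t2 := Nat.mul_le_mul_left 4 h3
  have t3 := Nat.mul_le_mul_left 1 h4
  have t4 := Nat.mul_le_mul_left 6 h5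
  have t5 := Nat.mul_le_mul_left 1 h6
  have t6 := Nat.mul_le_mul_left 4 h7
  have t7 := Nat.mul_le_mul_left 1 h8
  have t8 := Nat.mul_le_mul_left 4 h9
  have t9 := Nat.mul_le_mul_left 9 h10
  have t10 := Nat.mul_le_mul_left 4 h11
  have t11 := Nat.mul_le_mul_left 4 h12
  have t12 := Nat.mul_le_mul_left 2 h13
  have t13 := Nat.mul_le_mul_left 2 h14
  have t14 := Nat.mul_le_mul_left 4 h15
  have t15 := Nat.mul_le_mul_left 1 h16
  have t16 := Nat.mul_le_mul_left 1 h17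
  have t17 := Nat.mul_le_mul_left 2 h18
  have t18 := Nat.mul_le_mul_left 1 h19
  have t19 := Nat.mul_le_mul_left 1 h20
  have t20 := Nat.mul_le_mul_left 1 h21
  have t21 := Nat.mul_le_mul_left 1 h22
  have t22 := Nat.mul_le_mul_left 1 h23
  have t23 := Nat.mul_le_mul_left 1 h24
  have t24 := Nat.mul_le_mul_left 3 h25
  have t25 := Nat.mul_le_mul_left 4 h26
  have t26 := Nat.mul_le_mul_left 3 h27
  have t27 := Nat.mul_le_mul_left 1 h28
  have t28 := Nat.mul_le_mul_left 2 h29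
  have t29 := Nat.mul_le_mul_left 4 h30
  have t30 := Nat.mul_le_mul_left 2 h31
  have t31 := Nat.mul_le_mul_left 4 h32
  have t32 := Nat.mul_le_mul_left 7 h33
  have t33 := Nat.mul_le_mul_left 2 h34
  have t34 := Nat.mul_le_mul_left 1 h35
  have t35 := Nat.mul_le_mul_left 2 h36
  have t36 := Nat.mul_le_mul_left 4 h37
  have t37 := Nat.mul_le_mul_left 1 h38
  have t38 := Nat.mul_le_mul_left 2 h39
  have t39 := Nat.mul_le_mul_left 4 h40
  have t40 := Nat.mul_le_mul_left 2 h41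
  have t41 := Nat.mul_le_mul_left 8 h42
  have t42 := Nat.mul_le_mul_left 2 h43
  have t43 := Nat.mul_le_mul_left 3 h44
  have t44 := Nat.mul_le_mul_left 9 h45
  have t45 := Nat.mul_le_mul_left 2 h46
  have t46 := Nat.mul_le_mul_left 3 h47
  have t47 := Nat.mul_le_mul_left 1 h48
  have t48 := Nat.mul_le_mul_left 1 h49
  have a0 := t0
  have a1 := Nat.add_le_add a0 t1
  have a2 := Nat.add_le_add a1 t2
  have a3 := Nat.add_le_add a2 t3
  have a4 := Nat.add_le_add a3 t4
  have a5 := Nat.add_le_add a4 t5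
  have a6 := Nat.add_le_add a5 t6
  have a7 := Nat.add_le_add a6 t7
  have a8 := Nat.add_le_add a7 t8
  have a9 := Nat.add_le_add a8 t9
  have a10 := Nat.add_le_add a9 t10
  have a11 := Nat.add_le_add a10 t11
  have a12 := Nat.add_le_add a11 t12
  have a13 := Nat.add_le_add a12 t13
  have a14 := Nat.add_le_add a13 t14
  have a15 := Nat.add_le_add a14 t15
  have a16 := Nat.add_le_add a15 t16
  have a17 := Nat.add_le_add a16 t17
  have a18 := Nat.add_le_add a17 t18
  have a19 := Nat.add_le_add a18 t19
  have a20 := Nat.add_le_add a19 t20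
  have a21 := Nat.add_le_add a20 t21
  have a22 := Nat.add_le_add a21 t22
  have a23 := Nat.add_le_add a22 t23
  have a24 := Nat.add_le_add a23 t24
  have a25 := Nat.add_le_add a24 t25
  have a26 := Nat.add_le_add a25 t26
  have a27 := Nat.add_le_add a26 t27
  have a28 := Nat.add_le_add a27 t28
  have a29 := Nat.add_le_add a28 t29
  have a30 := Nat.add_le_add a29 t30
  have a31 := Nat.add_le_add a30 t31
  have a32 := Nat.add_le_add a31 t32
  have a33 := Nat.add_le_add a32 t33
  have a34 := Nat.add_le_add a33 t34
  have a35 := Nat.add_le_add a34 t35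
  have a36 := Nat.add_le_add a35 t36
  have a37 := Nat.add_le_add a36 t37
  have a38 := Nat.add_le_add a37 t38
  have a39 := Nat.add_le_add a38 t39
  have a40 := Nat.add_le_add a39 t40
  have a41 := Nat.add_le_add a40 t41
  have a42 := Nat.add_le_add a41 t42
  have a43 := Nat.add_le_add a42 t43
  have a44 := Nat.add_le_add a43 t44
  have a45 := Nat.add_le_add a44 t45
  have a46 := Nat.add_le_add a45 t46
  have a47 := Nat.add_le_add a46 t47
  have a48 := Nat.add_le_add a47 t48
  clear h1 h2 h3 h4 h5 h6 h7 h8 h9 h10 h11 h12 h13 h14 h15 h16 h17 h18 h19 h20 h21 h22 h23 h24 h25 h26 h27 h28 h29 h30 h31 h32 h33 h34 h35 h36 h37 h38 h39 h40 h41 h42 h43 h44 h45 h46 h47 h48 h49 t0 t1 t2 t3 t4 t5 t6 t7 t8 t9 t10 t11 t12 t13 t14 t15 t16 t17 t18 t19 t20 t21 t22 t23 t24 t25 t26 t27 t28 t29 t30 t31 t32 t33 t34 t35 t36 t37 t38 t39 t40 t41 t42 t43 t44 t45 t46 t47 t48 a0 a1 a2 a3 a4 a5 a6 a7 a8 a9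 a10 a11 a12 a13 a14 a15 a16 a17 a18 a19 a20 a21 a22 a23 a24 a25 a26 a27 a28 a29 a30 a31 a32 a33 a34 a35 a36 a37 a38 a39 a40 a41 a42 a43 a44 a45 a46 a47
  omega
end

section
/- Let p be an odd prime. In the vector space V = (GF(p))^3, the subspaces A = span{(1,0,0)}, B = span{(0,1,0)}, C = span{(0,0,1)}, W = span{(1,1,0)}, X = span{(1,0,1)}, Y = span{(0,1,1)}, Z = span{(1,1,1)} violate the inequality 2H(A) + 3H(B) + 2H(C) ≤ H(W) + H(X) + H(Y) + 3H(Z) + 2H(A|Y,Z) + 3H(B|X,Z) + H(C|W,Z) + 2H(W|A,B) + 4H(X|A,C) + 3H(Y|B,C) + 6H(Z|A,B,C) + H(C|W,X,Y) + 7(H(A) + H(B) + H(C) − H(A,B,C)); that is, with these subspaces the left-hand side is strictly greater than the right-hand side. -/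
/-!
All seven subspaces are lines and `A, B, C` span `V`, so the left-hand side is `7`. Every
conditional term vanishes because the conditioned line already lies in the conditioning sum; for
`H(C | W, X, Y)` this needs `2` to be invertible, which is exactly where odd characteristic enters.
The right-hand side is therefore `1 + 1 + 1 + 3 = 6`.
-/

open Matrix

open Submodule

section
variable {R M : Type*} [Semiring R] [AddCommMonoid M] [Module R M]

lemma mem_sup_span_singleton_of_smul_add_smul {u v w : M} (a b : R) (h : a • v + b • w = u) :
    u ∈ span R {v} ⊔ span R {w} :=
  h ▸ add_mem_sup (smul_mem _ a (mem_span_singleton_self v))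
    (smul_mem _ b (mem_span_singleton_self w))

lemma mem_sup_sup_span_singleton_of_smul_add_smul_add_smul {u v w x : M} (a b c : R)
    (h : a • v + b • w + c • x = u) : u ∈ span R {v} ⊔ span R {w} ⊔ span R {x} :=
  h ▸ add_mem_sup (mem_sup_span_singleton_of_smul_add_smul a b rfl)
    (smul_mem _ c (mem_span_singleton_self x))

end

section
variable {F V : Type*} [Field F] [AddCommGroup V] [Module F V]

lemma Hdim_span_singleton {v : V} (hv : v ≠ 0) : Hdim F (span F {v}) = 1 := by
  simp [Hdim, finrank_span_singleton hv]

lemma Hcond_span_singleton_of_mem {u : V} {T : Submodule F V} (hu : u ∈ T) :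
    Hcond F (span F {u}) T = 0 := by
  simp [Hcond, sup_eq_right.mpr ((span_singleton_le_iff_mem u T).mpr hu)]

end

lemma Hdim_top_fin_fun (F : Type*) [Field F] (n : ℕ) :
    Hdim F (⊤ : Submodule F (Fin n → F)) = n := by
  simp [Hdim]

lemma sup_span_basis_fin_three_eq_top (F : Type*) [Field F] :
    span F {![(1 : F), 0, 0]} ⊔ span F {![0, 1, 0]} ⊔ span F {![0, 0, 1]} = ⊤ :=
  eq_top_iff.mpr fun v _ ↦ mem_sup_sup_span_singleton_of_smul_add_smul_add_smul (v 0) (v 1) (v 2)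
    (by ext i; fin_cases i <;> simp)

/-- `(1,0,1) + (0,1,1) - (1,1,0) = 2 • (0,0,1)`; in characteristic `2` this is the Fano
dependency and the membership fails. -/
lemma vec_001_mem_sup_span_of_two_ne_zero {F : Type*} [Field F] (h2 : (2 : F) ≠ 0) :
    ![(0 : F), 0, 1] ∈ span F {![1, 1, 0]} ⊔ span F {![1, 0, 1]} ⊔ span F {![0, 1, 1]} := by
  rw [← span_singleton_le_iff_mem, ← span_singleton_smul_eq (IsUnit.mk0 2 h2),
    span_singleton_le_iff_mem]
  exact mem_sup_sup_span_singleton_of_smul_add_smul_add_smul (-1) 1 1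
    (by ext i; fin_cases i <;> simp; norm_num)

lemma ZMod.two_ne_zero_of_odd {p : ℕ} [Nontrivial (ZMod p)] (hodd : Odd p) : (2 : ZMod p) ≠ 0 :=
  Ring.two_ne_zero (by rw [ZMod.ringChar_zmod_n]; rintro rfl; exact absurd hodd (by decide))

/-- Over `GF(p)^3` for an odd prime `p`, the one-dimensional non-Fano-configuration
subspaces violate the even-characteristic linear rank inequality of the non-Fano network. -/
theorem nonfano_linear_rank_inequality_fails_odd_char
    (p : ℕ) (hp : p.Prime) (hodd : Odd p) :
    letI F := ZMod p
    haveI : Fact p.Prime := ⟨hp⟩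
    ∀ (A B C W X Y Z : Submodule F (Fin 3 → F)),
      A = Submodule.span F {![1,0,0]} →
      B = Submodule.span F {![0,1,0]} →
      C = Submodule.span F {![0,0,1]} →
      W = Submodule.span F {![1,1,0]} →
      X = Submodule.span F {![1,0,1]} →
      Y = Submodule.span F {![0,1,1]} →
      Z = Submodule.span F {![1,1,1]} →
      2 * Hdim F A + 3 * Hdim F B + 2 * Hdim F C >
        Hdim F W + Hdim F X + Hdim F Y + 3 * Hdim F Z
        + 2 * Hcond F A (Y ⊔ Z) + 3 * Hcond F B (X ⊔ Z) + Hcond F C (W ⊔ Z)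
        + 2 * Hcond F W (A ⊔ B) + 4 * Hcond F X (A ⊔ C) + 3 * Hcond F Y (B ⊔ C)
        + 6 * Hcond F Z (A ⊔ B ⊔ C) + Hcond F C (W ⊔ X ⊔ Y)
        + 7 * (Hdim F A + Hdim F B + Hdim F C - Hdim F (A ⊔ B ⊔ C)) := by
  have : Fact p.Prime := ⟨hp⟩
  intro A B C W X Y Z hA hB hC hW hX hY hZ
  subst hA hB hC hW hX hY hZ
  have hC_mem := vec_001_mem_sup_span_of_two_ne_zero (ZMod.two_ne_zero_of_odd hodd)
  rw [Hcond_span_singleton_of_mem hC_mem, Hcond_span_singleton_of_mem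
      (mem_sup_sup_span_singleton_of_smul_add_smul_add_smul 1 1 1 (by simp)),
    Hcond_span_singleton_of_mem (mem_sup_span_singleton_of_smul_add_smul (-1) 1 (by simp)),
    Hcond_span_singleton_of_mem (mem_sup_span_singleton_of_smul_add_smul (-1) 1 (by simp)),
    Hcond_span_singleton_of_mem (mem_sup_span_singleton_of_smul_add_smul (-1) 1 (by simp)),
    Hcond_span_singleton_of_mem (mem_sup_span_singleton_of_smul_add_smul 1 1 (by simp)),
    Hcond_span_singleton_of_mem (mem_sup_span_singleton_of_smul_add_smul 1 1 (by simp)),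
    Hcond_span_singleton_of_mem (mem_sup_span_singleton_of_smul_add_smul 1 1 (by simp)),
    sup_span_basis_fin_three_eq_top, Hdim_top_fin_fun]
  norm_num [Hdim_span_singleton]
end
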